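/- Let (N,v) be a convex integer coalitional game and let x, y ∈ {0,1}^N be two payoff vectors in the core of (N,v). If i ∈ N is a player with x_i = 1 and y_i = 0, then there exists a player j ∈ N with x_j = 0 and y_j = 1 such that the payoff vector obtained from x by changing x_i to 0 and x_j to 1 also belongs to the core of (N,v). -/

import Mathlib

open Finset

/-- A game is convex if marginal contributions increase with coalition size. -/
def IsConvex {α : Type*} [DecidableEq α] (v : Finset α → ℝ) : Prop :=
  ∀ (i : α) (S T : Finset α), S ⊆ T → i ∉ T →
    v (insert i S) - v S ≤ v (insert i T) - v T

/-- An integer game: every coalition value is an integer. -/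
def IsIntegerGame {α : Type*} (v : Finset α → ℝ) : Prop :=
  ∀ S : Finset α, ∃ z : ℤ, v S = (z : ℝ)

/-- A size-bounded game: `v S < |S|` for every nonempty coalition. -/
def IsSizeBounded {α : Type*} (v : Finset α → ℝ) : Prop :=
  ∀ S : Finset α, S.Nonempty → v S < (S.card : ℝ)

/-- A payoff vector belongs to the core. -/
def InCore {α : Type*} [Fintype α] [DecidableEq α] (v : Finset α → ℝ) (x : α → ℝ) : Prop :=
  (∑ i, x i) = v Finset.univ ∧ ∀ S : Finset α, v S ≤ ∑ i ∈ S, x i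

/-- The set of players preceding `i` in the ordering `σ`. -/
def preSet {α : Type*} [Fintype α] [DecidableEq α]
    (σ : α ≃ Fin (Fintype.card α)) (i : α) : Finset α :=
  Finset.univ.filter (fun j => σ j < σ i)

/-- The Shapley value of player `i`: average marginal contribution over all orderings. -/
noncomputable def SV {α : Type*} [Fintype α] [DecidableEq α]
    (v : Finset α → ℝ) (i : α) : ℝ :=
  (∑ σ : α ≃ Fin (Fintype.card α), (v (insert i (preSet σ i)) - v (preSet σ i))) /
    (Nat.factorial (Fintype.card α) : ℝ)

/-- The Harsanyi dividend of a coalition. -/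
noncomputable def dividend {α : Type*} [DecidableEq α] (v : Finset α → ℝ) (S : Finset α) : ℝ :=
  ∑ T ∈ S.powerset, (-1 : ℝ) ^ (S.card - T.card) * v T

/-- A positive game: all Harsanyi dividends are nonnegative. -/
def IsPositive {α : Type*} [DecidableEq α] (v : Finset α → ℝ) : Prop :=
  ∀ S : Finset α, 0 ≤ dividend v S

/-- The `c`-reduced game on player set `N \ {i}`. -/
noncomputable def reducedGame {α : Type*} [Fintype α] [DecidableEq α]
    (v : Finset α → ℝ) (i : α) (c : ℝ) : Finset {j : α // j ≠ i} → ℝ :=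
  fun S =>
    if S = Finset.univ then v Finset.univ - c
    else if S = ∅ then 0
    else max (v (insert i (S.image Subtype.val)) - c) (v (S.image Subtype.val))

/-!
Call a coalition tight for a core vector `x` if `x(S) = v(S)`. By supermodularity of a convex game,
the tight coalitions are closed under intersection, so there is a smallest tight coalition `T`
containing `i`. Since `y(T) ≥ v(T) = x(T)` while `y i < x i`, some `j ∈ T` has `x j < y j`, i.e.
`x j = 0` and `y j = 1`. Moving one unit from `i` to `j` only lowers `x(S)` for coalitions containing
`i` but not `j`; these are not tight, hence by integrality `x(S) ≥ v(S) + 1`.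
-/

section Supermodular

variable {α : Type*} [DecidableEq α] {v : Finset α → ℝ}

lemma IsConvex.add_le_add_of_subset_of_disjoint (hconv : IsConvex v) {A T : Finset α}
    (hAT : A ⊆ T) {D : Finset α} (hD : Disjoint D T) : v (A ∪ D) + v T ≤ v (T ∪ D) + v A := by
  induction D using Finset.induction_on with
  | empty => simp only [Finset.union_empty]; linarith
  | insert a D haD ih =>
    rw [Finset.disjoint_insert_left] at hD
    have hmarginal := hconv a (A ∪ D) (T ∪ D) (Finset.union_subset_union hAT le_rfl)
      (by simp [hD.1, haD])
    rw [Finset.union_insert, Finset.union_insert]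
    linarith [ih hD.2]

lemma IsConvex.supermodular (hconv : IsConvex v) (S T : Finset α) :
    v S + v T ≤ v (S ∪ T) + v (S ∩ T) := by
  have h := hconv.add_le_add_of_subset_of_disjoint (A := S ∩ T) (D := S \ T)
    Finset.inter_subset_right Finset.sdiff_disjoint
  rwa [Finset.union_comm, Finset.sdiff_union_inter, Finset.union_sdiff_self_eq_union,
    Finset.union_comm T] at h

end Supermodular

section Core

variable {α : Type*} [Fintype α] [DecidableEq α] {v : Finset α → ℝ} {x : α → ℝ}

def IsTight (v : Finset α → ℝ) (x : α → ℝ) (S : Finset α) : Prop :=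
  v S = ∑ k ∈ S, x k

lemma InCore.isTight_inter (hconv : IsConvex v) (hx : InCore v x) {S T : Finset α}
    (hS : IsTight v x S) (hT : IsTight v x T) : IsTight v x (S ∩ T) := by
  unfold IsTight at *
  have hsum := Finset.sum_union_inter (s₁ := S) (s₂ := T) (f := x)
  linarith [hx.2 (S ∪ T), hx.2 (S ∩ T), hconv.supermodular S T, hS.symm, hT.symm]

lemma InCore.exists_least_isTight_mem (hconv : IsConvex v) (hx : InCore v x) (i : α) :
    ∃ T, i ∈ T ∧ IsTight v x T ∧ ∀ S, i ∈ S → IsTight v x S → T ⊆ S := by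
  classical
  obtain ⟨T, hT, hTmin⟩ := (Finset.univ.filter fun S => i ∈ S ∧ IsTight v x S).exists_min_image
    Finset.card
    ⟨Finset.univ, Finset.mem_filter.2 ⟨Finset.mem_univ _, Finset.mem_univ _, hx.1.symm⟩⟩
  simp only [Finset.mem_filter, Finset.mem_univ, true_and] at hT hTmin
  refine ⟨T, hT.1, hT.2, fun S hiS hS => ?_⟩
  have hinter := hTmin (T ∩ S) ⟨Finset.mem_inter.2 ⟨hT.1, hiS⟩, hx.isTight_inter hconv hT.2 hS⟩
  rw [← Finset.eq_of_subset_of_card_le Finset.inter_subset_left hinter]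
  exact Finset.inter_subset_right

lemma InCore.add_single_sub_single {i j : α} (hx : InCore v x)
    (hij : ∀ S, i ∈ S → j ∉ S → v S + 1 ≤ ∑ k ∈ S, x k) :
    InCore v (x + Pi.single j 1 - Pi.single i 1 : α → ℝ) := by
  have hsum (S : Finset α) : ∑ k ∈ S, (x + Pi.single j 1 - Pi.single i 1 : α → ℝ) k =
      ∑ k ∈ S, x k + (if j ∈ S then 1 else 0) - (if i ∈ S then 1 else 0) := by
    simp only [Pi.add_apply, Pi.sub_apply, Finset.sum_sub_distrib, Finset.sum_add_distrib,
      Finset.sum_pi_single']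
  refine ⟨by rw [hsum]; simp [hx.1], fun S => ?_⟩
  rw [hsum]
  by_cases hiS : i ∈ S
  · by_cases hjS : j ∈ S
    · simp only [hiS, hjS, if_true]
      linarith [hx.2 S]
    · simp only [hiS, hjS, if_true, if_false]
      linarith [hij S hiS hjS]
  · split_ifs <;> linarith [hx.2 S]

end Core

lemma add_one_le_of_lt_of_isInt {a b : ℝ} (ha : ∃ m : ℤ, a = m) (hb : ∃ n : ℤ, b = n)
    (hab : a < b) : a + 1 ≤ b := by
  obtain ⟨m, rfl⟩ := ha
  obtain ⟨n, rfl⟩ := hb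
  exact_mod_cast Int.add_one_le_of_lt (by exact_mod_cast hab)

lemma exists_int_sum_eq_of_zero_or_one {α : Type*} {x : α → ℝ} (hx01 : ∀ k, x k = 0 ∨ x k = 1)
    (S : Finset α) : ∃ n : ℤ, ∑ k ∈ S, x k = n := by
  classical
  refine ⟨∑ k ∈ S, if x k = 1 then 1 else 0, ?_⟩
  push_cast
  refine Finset.sum_congr rfl fun k _ => ?_
  rcases hx01 k with h | h <;> simp [h]

lemma update_update_eq_add_single_sub_single {α : Type*} [DecidableEq α] {x : α → ℝ} {i j : α}
    (hji : j ≠ i) (hxi : x i = 1) (hxj : x j = 0) :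
    Function.update (Function.update x i 0) j 1 =
      (x + Pi.single j 1 - Pi.single i 1 : α → ℝ) := by
  ext k
  by_cases hkj : k = j
  · subst hkj; simp [hji, hxj]
  · by_cases hki : k = i
    · subst hki; simp [hkj, hxi]
    · simp [hki, hkj]

theorem stmt7_general {N : Type*} [Fintype N] [DecidableEq N]
    (v : Finset N → ℝ)
    (hconv : IsConvex v) (hint : IsIntegerGame v)
    (x y : N → ℝ) (hx01 : ∀ j, x j = 0 ∨ x j = 1) (hy01 : ∀ j, y j = 0 ∨ y j = 1)
    (hx : InCore v x) (hy : InCore v y)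
    (i : N) (hxi : x i = 1) (hyi : y i = 0) :
    ∃ j : N, x j = 0 ∧ y j = 1 ∧
      InCore v (Function.update (Function.update x i 0) j 1) := by
  obtain ⟨T, hiT, hT, hTleast⟩ := hx.exists_least_isTight_mem hconv i
  have hlt : ∑ k ∈ T.erase i, x k < ∑ k ∈ T.erase i, y k := by
    have hxT := Finset.add_sum_erase T x hiT
    have hyT := Finset.add_sum_erase T y hiT
    linarith [hy.2 T, hT.symm]
  obtain ⟨j, hjT, hxyj⟩ := Finset.exists_lt_of_sum_lt hlt
  obtain ⟨hxj, hyj⟩ : x j = 0 ∧ y j = 1 := by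
    rcases hx01 j with h | h <;> rcases hy01 j with h' | h' <;> exact ⟨by linarith, by linarith⟩
  refine ⟨j, hxj, hyj, ?_⟩
  rw [update_update_eq_add_single_sub_single (Finset.ne_of_mem_erase hjT) hxi hxj]
  refine hx.add_single_sub_single fun S hiS hjS => add_one_le_of_lt_of_isInt (hint S)
    (exists_int_sum_eq_of_zero_or_one hx01 S) (lt_of_le_of_ne (hx.2 S) fun hS => ?_)
  exact hjS (hTleast S hiS hS (Finset.mem_of_mem_erase hjT))

theorem stmt7 {N : Type*} [Fintype N] [DecidableEq N] [Nonempty N]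
    (v : Finset N → ℝ) (hv0 : v ∅ = 0)
    (hconv : IsConvex v) (hint : IsIntegerGame v)
    (x y : N → ℝ) (hx01 : ∀ j, x j = 0 ∨ x j = 1) (hy01 : ∀ j, y j = 0 ∨ y j = 1)
    (hx : InCore v x) (hy : InCore v y)
    (i : N) (hxi : x i = 1) (hyi : y i = 0) :
    ∃ j : N, x j = 0 ∧ y j = 1 ∧
      InCore v (Function.update (Function.update x i 0) j 1) :=
  stmt7_general v hconv hint x y hx01 hy01 hx hy i hxi hyi
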